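/- Cancellation for strong bisimilarity in microCCS: for all processes P, Q, R, if P‖R ∼ Q‖R then P ∼ Q. -/

import Mathlib

/-- CCS visible actions: a name `a` or a coname `ā`. -/
inductive Act where
  | inp : ℕ → Act
  | out : ℕ → Act
deriving DecidableEq

/-- The coaction. -/
def Act.co : Act → Act
  | .inp a => .out a
  | .out a => .inp a

/-- MicroCCS processes: nil, prefix, parallel composition. -/
inductive Proc where
  | nil : Proc
  | pre : Act → Proc → Proc
  | par : Proc → Proc → Proc
deriving DecidableEq

/-- Transition labels: a visible action or τ. -/
inductive Lab where
  | act : Act → Lab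
  | tau : Lab
deriving DecidableEq

/-- The standard CCS labelled transition system on microCCS. -/
inductive Step : Proc → Lab → Proc → Prop where
  | pre (η : Act) (P : Proc) : Step (.pre η P) (.act η) P
  | syn {P P' Q Q' : Proc} {η : Act} :
      Step P (.act η) P' → Step Q (.act η.co) Q' →
      Step (.par P Q) .tau (.par P' Q')
  | parL {P P' : Proc} {μ : Lab} (Q : Proc) :
      Step P μ P' → Step (.par P Q) μ (.par P' Q)
  | parR {Q Q' : Proc} {μ : Lab} (P : Proc) :
      Step Q μ Q' → Step (.par P Q) μ (.par P Q')

/-- A (symmetric) bisimulation. -/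
def IsBisim (R : Proc → Proc → Prop) : Prop :=
  (∀ P Q, R P Q → R Q P) ∧
  ∀ P Q μ P', R P Q → Step P μ P' → ∃ Q', Step Q μ Q' ∧ R P' Q'

/-- Strong bisimilarity: the union of all bisimulations. -/
def Bisim (P Q : Proc) : Prop := ∃ R, IsBisim R ∧ R P Q

/-- The size of a process: its number of prefixes. -/
def Proc.size : Proc → ℕ
  | .nil => 0
  | .pre _ P => 1 + P.size
  | .par P Q => P.size + Q.size

/-- Structural congruence: abelian monoid laws for parallel composition. -/
inductive SC : Proc → Proc → Prop where
  | refl (P) : SC P P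
  | symm : SC P Q → SC Q P
  | trans : SC P Q → SC Q R → SC P R
  | comm (P Q) : SC (.par P Q) (.par Q P)
  | assoc (P Q R) : SC (.par P (.par Q R)) (.par (.par P Q) R)
  | unit (P) : SC (.par P .nil) P
  | pre (η) : SC P Q → SC (.pre η P) (.pre η Q)
  | par : SC P P' → SC Q Q' → SC (.par P Q) (.par P' Q')

/-- `pow P k` is the k-fold parallel composition of `P`. -/
def pow (P : Proc) : ℕ → Proc
  | 0 => .nil
  | n+1 => .par P (pow P n)

/-- One step of rewriting with the distribution law
    `η.(P ‖ (η.P)^k) ⇝ (η.P)^{k+1}` (k ≥ 1), modulo structural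
    congruence, in any context. -/
inductive RW : Proc → Proc → Prop where
  | head {η : Act} {P : Proc} {k : ℕ} (hk : 1 ≤ k) :
      RW (.pre η (.par P (pow (.pre η P) k))) (pow (.pre η P) (k+1))
  | pre (η) : RW P P' → RW (.pre η P) (.pre η P')
  | parL (Q) : RW P P' → RW (.par P Q) (.par P' Q)
  | parR (P) : RW Q Q' → RW (.par P Q) (.par P Q')
  | congr : SC P P₁ → RW P₁ P₂ → SC P₂ P' → RW P P'

/-- Reflexive-transitive closure of the distribution rewriting. -/
def Rws : Proc → Proc → Prop := Relation.ReflTransGen RW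

/-- Normal forms for the distribution rewriting. -/
def NF (P : Proc) : Prop := ¬ ∃ P', RW P P'

/-- Prime processes. -/
def IsPrime (P : Proc) : Prop :=
  ¬ Bisim P .nil ∧ ∀ Q R, Bisim P (.par Q R) → Bisim Q .nil ∨ Bisim R .nil


/-!
Cancellation is proved together with uniqueness of prime decompositions, by induction on size
(the number of prefixes, which bisimilarity preserves): cancellation at a given size uses both
statements at smaller sizes, and uniqueness uses cancellation to strip a common prime factor.

To get `P ∼ Q` from `P ‖ R ∼ Q ‖ R`, each move of `P` is matched by `Q`. A visible move of `P` is
answered either by `Q`, and then `R` is cancelled at a smaller size, or by `R`, and then the same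
move of `R` on the left has to be answered in turn; as `R` shrinks, `Q` answers eventually.
A τ-move of `P` is a synchronisation, so `P` can also perform its two halves `η`, `η̄` in either
order, and `Q` answers both paths; if neither collapses into a τ-move of `Q`, the two answers
contradict unique decomposition of a smaller process.
-/

namespace Act

theorem co_co (η : Act) : η.co.co = η := by cases η <;> rfl

theorem co_ne (η : Act) : η.co ≠ η := by cases η <;> simp [Act.co]

end Act

open Act

infix:50 " ∼ " => Bisim

variable {P Q R A B C D W V X Y P' A' W' : Proc} {l l₁ l₂ : List Proc} {η : Act} {μ : Lab}

namespace Step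

theorem pre_inv (h : Step (.pre η A) μ B) : μ = .act η ∧ B = A := by
  cases h; exact ⟨rfl, rfl⟩

theorem par_inv (h : Step (.par A B) μ C) :
    (∃ A', Step A μ A' ∧ C = .par A' B) ∨ (∃ B', Step B μ B' ∧ C = .par A B') ∨
      ∃ α A' B', μ = .tau ∧ Step A (.act α) A' ∧ Step B (.act α.co) B' ∧ C = .par A' B' := by
  cases h with
  | syn h₁ h₂ => exact .inr (.inr ⟨_, _, _, rfl, h₁, h₂, rfl⟩)
  | parL _ h => exact .inl ⟨_, h, rfl⟩
  | parR _ h => exact .inr (.inl ⟨_, h, rfl⟩)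

theorem par_act_inv (h : Step (.par A B) (.act η) C) :
    (∃ A', Step A (.act η) A' ∧ C = .par A' B) ∨ ∃ B', Step B (.act η) B' ∧ C = .par A B' := by
  rcases h.par_inv with h | h | ⟨_, _, _, h, -⟩
  · exact .inl h
  · exact .inr h
  · cases h

theorem size_lt (h : Step A μ B) : B.size < A.size := by
  induction h <;> simp only [Proc.size] at * <;> omega

theorem size_act (h : Step A (.act η) B) : A.size = B.size + 1 := by
  generalize hμ : Lab.act η = μ at h
  induction h with
  | pre => simp only [Proc.size]; omega
  | syn => cases hμ
  | parL _ _ ih | parR _ _ ih => simp only [Proc.size]; have := ih hμ; omega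

theorem exists_act_co_of_tau (h : Step A .tau B) :
    ∃ α X V, Step A (.act α) X ∧ Step X (.act α.co) B ∧ Step A (.act α.co) V ∧
      Step V (.act α) B := by
  generalize hμ : Lab.tau = μ at h
  induction h with
  | pre => cases hμ
  | syn h₁ h₂ => exact ⟨_, _, _, .parL _ h₁, .parR _ h₂, .parR _ h₂, .parL _ h₁⟩
  | parL C _ ih =>
    obtain ⟨α, X, V, h₁, h₂, h₃, h₄⟩ := ih hμ
    exact ⟨α, _, _, .parL C h₁, .parL C h₂, .parL C h₃, .parL C h₄⟩
  | parR C _ ih =>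
    obtain ⟨α, X, V, h₁, h₂, h₃, h₄⟩ := ih hμ
    exact ⟨α, _, _, .parR C h₁, .parR C h₂, .parR C h₃, .parR C h₄⟩

theorem act_eq_of_pow_pre {k : ℕ} {α : Act} (h : Step (pow (.pre η A) k) (.act α) B) : α = η := by
  induction k generalizing B with
  | zero => cases h
  | succ k ih =>
    rcases h.par_act_inv with ⟨_, h, -⟩ | ⟨_, h, -⟩
    · exact Lab.act.inj h.pre_inv.1
    · exact ih h

end Step

theorem Proc.exists_act_step_of_size_pos (h : 0 < A.size) : ∃ η B, Step A (.act η) B := by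
  induction A with
  | nil => simp [Proc.size] at h
  | pre η A => exact ⟨η, A, .pre η A⟩
  | par A B ihA ihB =>
    by_cases hA : 0 < A.size
    · obtain ⟨η, A', hs⟩ := ihA hA
      exact ⟨η, _, .parL B hs⟩
    · obtain ⟨η, B', hs⟩ := ihB (by simp only [Proc.size] at h; omega)
      exact ⟨η, _, .parR A hs⟩

namespace Bisim

theorem exists_step (h : A ∼ B) (hs : Step A μ A') : ∃ B', Step B μ B' ∧ A' ∼ B' := by
  obtain ⟨R, hR, hAB⟩ := h
  obtain ⟨B', hB', h'⟩ := hR.2 _ _ _ _ hAB hs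
  exact ⟨B', hB', R, hR, h'⟩

theorem symm (h : A ∼ B) : B ∼ A := by
  obtain ⟨R, hR, hAB⟩ := h
  exact ⟨R, hR, hR.1 _ _ hAB⟩

theorem of_rel (r : Proc → Proc → Prop) (hAB : r A B)
    (fwd : ∀ P Q μ P', r P Q → Step P μ P' → ∃ Q', Step Q μ Q' ∧ r P' Q')
    (bwd : ∀ P Q μ Q', r P Q → Step Q μ Q' → ∃ P', Step P μ P' ∧ r P' Q') : A ∼ B := by
  refine ⟨fun P Q => r P Q ∨ r Q P, ⟨fun _ _ => Or.symm, ?_⟩, .inl hAB⟩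
  rintro P Q μ P' (h | h) hs
  · obtain ⟨Q', hQ', h'⟩ := fwd _ _ _ _ h hs
    exact ⟨Q', hQ', .inl h'⟩
  · obtain ⟨Q', hQ', h'⟩ := bwd _ _ _ _ h hs
    exact ⟨Q', hQ', .inr h'⟩

theorem refl (A : Proc) : A ∼ A :=
  of_rel Eq rfl (by rintro P _ μ P' rfl hs; exact ⟨P', hs, rfl⟩)
    (by rintro _ Q μ Q' rfl hs; exact ⟨Q', hs, rfl⟩)

theorem trans (h₁ : A ∼ B) (h₂ : B ∼ C) : A ∼ C := by
  refine ⟨fun P R => ∃ Q, P ∼ Q ∧ Q ∼ R, ⟨?_, ?_⟩, B, h₁, h₂⟩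
  · rintro P R ⟨Q, h₁, h₂⟩
    exact ⟨Q, h₂.symm, h₁.symm⟩
  · rintro P R μ P' ⟨Q, h₁, h₂⟩ hs
    obtain ⟨Q', hQ', h₁'⟩ := h₁.exists_step hs
    obtain ⟨R', hR', h₂'⟩ := h₂.exists_step hQ'
    exact ⟨R', hR', Q', h₁', h₂'⟩

instance : Trans Bisim Bisim Bisim := ⟨trans⟩

theorem of_steps (fwd : ∀ μ A', Step A μ A' → ∃ B', Step B μ B' ∧ A' ∼ B')
    (bwd : ∀ μ B', Step B μ B' → ∃ A', Step A μ A' ∧ A' ∼ B') : A ∼ B := by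
  refine of_rel (fun P Q => (P = A ∧ Q = B) ∨ P ∼ Q) (.inl ⟨rfl, rfl⟩) ?_ ?_
  · rintro P Q μ P' (⟨rfl, rfl⟩ | h) hs
    · obtain ⟨Q', hQ', h'⟩ := fwd μ P' hs
      exact ⟨Q', hQ', .inr h'⟩
    · obtain ⟨Q', hQ', h'⟩ := h.exists_step hs
      exact ⟨Q', hQ', .inr h'⟩
  · rintro P Q μ Q' (⟨rfl, rfl⟩ | h) hs
    · obtain ⟨P', hP', h'⟩ := bwd μ Q' hs
      exact ⟨P', hP', .inr h'⟩
    · obtain ⟨P', hP', h'⟩ := h.symm.exists_step hs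
      exact ⟨P', hP', .inr h'.symm⟩

theorem size_eq (h : A ∼ B) : A.size = B.size := by
  induction hn : A.size generalizing A B with
  | zero =>
    by_contra hne
    obtain ⟨η, B', hs⟩ := Proc.exists_act_step_of_size_pos (A := B) (by omega)
    obtain ⟨A', hs', -⟩ := h.symm.exists_step hs
    have := hs'.size_lt
    omega
  | succ n ih =>
    obtain ⟨η, A', hs⟩ := Proc.exists_act_step_of_size_pos (A := A) (by omega)
    obtain ⟨B', hs', h'⟩ := h.exists_step hs
    have := ih h' (by have := hs.size_act; omega)
    have := hs'.size_act
    omega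

theorem act_eq_of_pre {α : Act} (h : .pre η A ∼ .pre α B) : η = α := by
  obtain ⟨_, hs, -⟩ := h.exists_step (.pre η A)
  exact Lab.act.inj hs.pre_inv.1

theorem par (h₁ : A ∼ B) (h₂ : C ∼ D) : .par A C ∼ .par B D := by
  refine of_rel (fun X Y => ∃ A B C D, A ∼ B ∧ C ∼ D ∧ X = .par A C ∧ Y = .par B D)
    ⟨A, B, C, D, h₁, h₂, rfl, rfl⟩ ?fwd ?bwd
  case fwd =>
    rintro _ _ μ X' ⟨A, B, C, D, h₁, h₂, rfl, rfl⟩ hs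
    rcases hs.par_inv with ⟨A', hA, rfl⟩ | ⟨C', hC, rfl⟩ | ⟨α, A', C', rfl, hA, hC, rfl⟩
    · obtain ⟨B', hB, h₁'⟩ := h₁.exists_step hA
      exact ⟨_, .parL D hB, A', B', C, D, h₁', h₂, rfl, rfl⟩
    · obtain ⟨D', hD, h₂'⟩ := h₂.exists_step hC
      exact ⟨_, .parR B hD, A, B, C', D', h₁, h₂', rfl, rfl⟩
    · obtain ⟨B', hB, h₁'⟩ := h₁.exists_step hA
      obtain ⟨D', hD, h₂'⟩ := h₂.exists_step hC
      exact ⟨_, .syn hB hD, A', B', C', D', h₁', h₂', rfl, rfl⟩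
  case bwd =>
    rintro _ _ μ Y' ⟨A, B, C, D, h₁, h₂, rfl, rfl⟩ hs
    rcases hs.par_inv with ⟨B', hB, rfl⟩ | ⟨D', hD, rfl⟩ | ⟨α, B', D', rfl, hB, hD, rfl⟩
    · obtain ⟨A', hA, h₁'⟩ := h₁.symm.exists_step hB
      exact ⟨_, .parL C hA, A', B', C, D, h₁'.symm, h₂, rfl, rfl⟩
    · obtain ⟨C', hC, h₂'⟩ := h₂.symm.exists_step hD
      exact ⟨_, .parR A hC, A, B, C', D', h₁, h₂'.symm, rfl, rfl⟩
    · obtain ⟨A', hA, h₁'⟩ := h₁.symm.exists_step hB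
      obtain ⟨C', hC, h₂'⟩ := h₂.symm.exists_step hD
      exact ⟨_, .syn hA hC, A', B', C', D', h₁'.symm, h₂'.symm, rfl, rfl⟩

theorem par_left (A : Proc) (h : C ∼ D) : .par A C ∼ .par A D := (refl A).par h

theorem par_right (C : Proc) (h : A ∼ B) : .par A C ∼ .par B C := h.par (refl C)

theorem par_comm (A B : Proc) : .par A B ∼ .par B A := by
  refine ⟨fun X Y => ∃ A B, X = .par A B ∧ Y = .par B A, ⟨?_, ?_⟩, A, B, rfl, rfl⟩
  · rintro _ _ ⟨A, B, rfl, rfl⟩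
    exact ⟨B, A, rfl, rfl⟩
  · rintro _ _ μ X' ⟨A, B, rfl, rfl⟩ hs
    rcases hs.par_inv with ⟨A', hA, rfl⟩ | ⟨B', hB, rfl⟩ | ⟨α, A', B', rfl, hA, hB, rfl⟩
    · exact ⟨_, .parR B hA, A', B, rfl, rfl⟩
    · exact ⟨_, .parL A hB, A, B', rfl, rfl⟩
    · exact ⟨_, .syn hB (by rwa [co_co]), A', B', rfl, rfl⟩

theorem par_assoc (A B C : Proc) : .par A (.par B C) ∼ .par (.par A B) C := by
  refine of_rel (fun X Y => ∃ A B C, X = .par A (.par B C) ∧ Y = .par (.par A B) C)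
    ⟨A, B, C, rfl, rfl⟩ ?fwd ?bwd
  case fwd =>
    rintro _ _ μ X' ⟨A, B, C, rfl, rfl⟩ hs
    rcases hs.par_inv with ⟨A', hA, rfl⟩ | ⟨_, hBC, rfl⟩ | ⟨α, A', _, rfl, hA, hBC, rfl⟩
    · exact ⟨_, .parL C (.parL B hA), A', B, C, rfl, rfl⟩
    · rcases hBC.par_inv with ⟨B', hB, rfl⟩ | ⟨C', hC, rfl⟩ | ⟨α, B', C', rfl, hB, hC, rfl⟩
      · exact ⟨_, .parL C (.parR A hB), A, B', C, rfl, rfl⟩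
      · exact ⟨_, .parR _ hC, A, B, C', rfl, rfl⟩
      · exact ⟨_, .syn (.parR A hB) hC, A, B', C', rfl, rfl⟩
    · rcases hBC.par_act_inv with ⟨B', hB, rfl⟩ | ⟨C', hC, rfl⟩
      · exact ⟨_, .parL C (.syn hA hB), A', B', C, rfl, rfl⟩
      · exact ⟨_, .syn (.parL B hA) hC, A', B, C', rfl, rfl⟩
  case bwd =>
    rintro _ _ μ Y' ⟨A, B, C, rfl, rfl⟩ hs
    rcases hs.par_inv with ⟨_, hAB, rfl⟩ | ⟨C', hC, rfl⟩ | ⟨α, _, C', rfl, hAB, hC, rfl⟩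
    · rcases hAB.par_inv with ⟨A', hA, rfl⟩ | ⟨B', hB, rfl⟩ | ⟨α, A', B', rfl, hA, hB, rfl⟩
      · exact ⟨_, .parL _ hA, A', B, C, rfl, rfl⟩
      · exact ⟨_, .parR A (.parL C hB), A, B', C, rfl, rfl⟩
      · exact ⟨_, .syn hA (.parL C hB), A', B', C, rfl, rfl⟩
    · exact ⟨_, .parR A (.parR B hC), A, B, C', rfl, rfl⟩
    · rcases hAB.par_act_inv with ⟨A', hA, rfl⟩ | ⟨B', hB, rfl⟩
      · exact ⟨_, .syn hA (.parR B hC), A', B, C', rfl, rfl⟩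
      · exact ⟨_, .parR A (.syn hB hC), A, B', C', rfl, rfl⟩

theorem par_left_comm (A B C : Proc) : .par A (.par B C) ∼ .par B (.par A C) :=
  calc .par A (.par B C) ∼ .par (.par A B) C := par_assoc A B C
    _ ∼ .par (.par B A) C := (par_comm A B).par_right C
    _ ∼ .par B (.par A C) := (par_assoc B A C).symm

theorem par_nil (A : Proc) : .par A .nil ∼ A := by
  refine of_rel (fun X Y => X = .par Y .nil) rfl ?_ ?_
  · rintro _ Y μ X' rfl hs
    rcases hs.par_inv with ⟨A', hA, rfl⟩ | ⟨_, h, -⟩ | ⟨_, _, _, -, -, h, -⟩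
    · exact ⟨A', hA, rfl⟩
    all_goals cases h
  · rintro _ Y μ Y' rfl hs
    exact ⟨_, .parL _ hs, rfl⟩

theorem nil_par (A : Proc) : .par .nil A ∼ A := (par_comm _ _).trans (par_nil A)

end Bisim

theorem Proc.bisim_nil_iff : A ∼ .nil ↔ A.size = 0 :=
  ⟨Bisim.size_eq, fun h => .of_steps (fun _ _ hs => absurd hs.size_lt (by omega)) nofun⟩

def parList : List Proc → Proc
  | [] => .nil
  | p :: l => .par p (parList l)

theorem size_parList (l : List Proc) : (parList l).size = (l.map Proc.size).sum := by
  induction l with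
  | nil => rfl
  | cons p l ih => simp [parList, Proc.size, ih]

theorem size_le_size_parList (hp : P ∈ l) : P.size ≤ (parList l).size :=
  size_parList l ▸ List.le_sum_of_mem (List.mem_map_of_mem hp)

theorem parList_replicate (P : Proc) (k : ℕ) : parList (List.replicate k P) = pow P k := by
  induction k with
  | zero => rfl
  | succ k ih => simp [parList, pow, List.replicate_succ, ih]

theorem bisim_parList_append (l₁ l₂ : List Proc) :
    parList (l₁ ++ l₂) ∼ .par (parList l₁) (parList l₂) := by
  induction l₁ with
  | nil => exact (Bisim.nil_par _).symm
  | cons p l₁ ih => exact (ih.par_left p).trans (Bisim.par_assoc _ _ _)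

theorem bisim_parList_perm (h : l₁.Perm l₂) : parList l₁ ∼ parList l₂ := by
  induction h with
  | nil => exact .refl _
  | cons p _ ih => exact ih.par_left p
  | swap p q l => exact Bisim.par_left_comm q p _
  | trans _ _ ih₁ ih₂ => exact ih₁.trans ih₂

theorem bisim_parList_erase (hp : P ∈ l) :
    parList l ∼ .par P (parList (l.erase P)) :=
  bisim_parList_perm (List.perm_cons_erase hp)

theorem bisim_pow_of_forall_bisim (h : ∀ P ∈ l, P ∼ Q) : parList l ∼ pow Q l.length := by
  induction l with
  | nil => exact .refl _
  | cons P l ih =>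
    exact (h P List.mem_cons_self).par (ih fun R hR => h R (List.mem_cons_of_mem P hR))

theorem Step.parList_act_inv (h : Step (parList l) (.act η) A) :
    ∃ P P' l', l.Perm (P :: l') ∧ Step P (.act η) P' ∧ A ∼ .par P' (parList l') := by
  induction l generalizing A with
  | nil => cases h
  | cons Q l ih =>
    rcases h.par_act_inv with ⟨Q', hQ, rfl⟩ | ⟨A', hA, rfl⟩
    · exact ⟨Q, Q', l, .refl _, hQ, .refl _⟩
    · obtain ⟨P, P', l', hl, hP, hA'⟩ := ih hA
      exact ⟨P, P', Q :: l', (hl.cons Q).trans (.swap P Q l'), hP,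
        (hA'.par_left Q).trans (Bisim.par_left_comm _ _ _)⟩

theorem IsPrime.of_bisim (hP : IsPrime P) (h : P ∼ Q) : IsPrime Q :=
  ⟨fun hQ => hP.1 (h.trans hQ), fun A B hQ => hP.2 A B (h.trans hQ)⟩

theorem IsPrime.size_pos (hP : IsPrime P) : 0 < P.size :=
  Nat.pos_of_ne_zero fun h => hP.1 (Proc.bisim_nil_iff.2 h)

theorem IsPrime.exists_bisim_pre (hP : IsPrime P) : ∃ η Z, P ∼ .pre η Z := by
  induction P with
  | nil => exact absurd (.refl _) hP.1
  | pre η Z => exact ⟨η, Z, .refl _⟩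
  | par A B ihA ihB =>
    rcases hP.2 A B (.refl _) with hA | hB
    · have hAB : .par A B ∼ B := (hA.par_right B).trans (Bisim.nil_par B)
      obtain ⟨η, Z, h⟩ := ihB (hP.of_bisim hAB)
      exact ⟨η, Z, hAB.trans h⟩
    · have hAB : .par A B ∼ A := (hB.par_left A).trans (Bisim.par_nil A)
      obtain ⟨η, Z, h⟩ := ihA (hP.of_bisim hAB)
      exact ⟨η, Z, hAB.trans h⟩

def IsPrimeDecomp (X : Proc) (l : List Proc) : Prop :=
  (∀ P ∈ l, IsPrime P) ∧ X ∼ parList l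

theorem isPrimeDecomp_parList (h : ∀ P ∈ l, IsPrime P) : IsPrimeDecomp (parList l) l :=
  ⟨h, .refl _⟩

namespace IsPrimeDecomp

theorem of_bisim (hY : IsPrimeDecomp Y l) (h : X ∼ Y) : IsPrimeDecomp X l :=
  ⟨hY.1, h.trans hY.2⟩

theorem par (hA : IsPrimeDecomp A l₁) (hB : IsPrimeDecomp B l₂) :
    IsPrimeDecomp (.par A B) (l₁ ++ l₂) := by
  refine ⟨fun P hP => ?_, (hA.2.par hB.2).trans (bisim_parList_append l₁ l₂).symm⟩
  rcases List.mem_append.1 hP with hP | hP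
  · exact hA.1 P hP
  · exact hB.1 P hP

theorem pow (hP : IsPrime P) (k : ℕ) : IsPrimeDecomp (pow P k) (List.replicate k P) :=
  ⟨fun _ hQ => List.eq_of_mem_replicate hQ ▸ hP, parList_replicate P k ▸ .refl _⟩

theorem erase (h : IsPrimeDecomp X l) (P : Proc) :
    IsPrimeDecomp (parList (l.erase P)) (l.erase P) :=
  isPrimeDecomp_parList fun _ hQ => h.1 _ (List.mem_of_mem_erase hQ)

end IsPrimeDecomp

theorem Proc.exists_isPrimeDecomp (X : Proc) : ∃ l, IsPrimeDecomp X l := by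
  induction hn : X.size using Nat.strong_induction_on generalizing X with
  | _ n ih =>
  by_cases h0 : X ∼ .nil
  · exact ⟨[], nofun, h0⟩
  by_cases hX : IsPrime X
  · exact ⟨[X], by simpa using hX, (Bisim.par_nil X).symm⟩
  obtain ⟨A, B, hAB, hA, hB⟩ : ∃ A B, X ∼ .par A B ∧ ¬ A ∼ .nil ∧ ¬ B ∼ .nil := by
    simpa [IsPrime, h0] using hX
  have hsize : X.size = A.size + B.size := hAB.size_eq
  rw [Proc.bisim_nil_iff] at hA hB
  obtain ⟨lA, hlA⟩ := ih A.size (by omega) A rfl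
  obtain ⟨lB, hlB⟩ := ih B.size (by omega) B rfl
  exact ⟨lA ++ lB, (hlA.par hlB).of_bisim hAB⟩

instance Proc.bisimSetoid : Setoid Proc := ⟨Bisim, ⟨Bisim.refl, Bisim.symm, Bisim.trans⟩⟩

abbrev BisimClass : Type := Quotient Proc.bisimSetoid

noncomputable instance : DecidableEq BisimClass := Classical.decEq _

theorem BisimClass.mk_eq_mk : (⟦P⟧ : BisimClass) = ⟦Q⟧ ↔ P ∼ Q := Quotient.eq

def BisimClass.size : BisimClass → ℕ := Quotient.lift Proc.size fun _ _ h => Bisim.size_eq h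

def classes (l : List Proc) : Multiset BisimClass := (l.map fun P => ⟦P⟧ : List BisimClass)

theorem classes_append (l₁ l₂ : List Proc) : classes (l₁ ++ l₂) = classes l₁ + classes l₂ := by
  simp [classes]

theorem classes_replicate (k : ℕ) (P : Proc) :
    classes (List.replicate k P) = Multiset.replicate k ⟦P⟧ := by
  simp [classes, Multiset.coe_replicate]

theorem mem_classes {x : BisimClass} : x ∈ classes l ↔ ∃ P ∈ l, ⟦P⟧ = x := by
  simp [classes]

theorem classes_eq_cons_erase (hP : P ∈ l) :
    classes l = ⟦P⟧ ::ₘ classes (l.erase P) := by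
  simpa [classes] using (List.perm_cons_erase hP).map fun Q => (⟦Q⟧ : BisimClass)

theorem size_parList_le_of_classes_le (h : classes l₁ ≤ classes l₂) :
    (parList l₁).size ≤ (parList l₂).size := by
  have hsum : ∀ l, ((classes l).map BisimClass.size).sum = (parList l).size := fun l => by
    simp [classes, size_parList, Function.comp_def, BisimClass.size]
  obtain ⟨u, hu⟩ := Multiset.le_iff_exists_add.1 h
  rw [← hsum, ← hsum, hu, Multiset.map_add, Multiset.sum_add]
  exact Nat.le_add_right _ _

theorem IsPrimeDecomp.size_le_of_mem_classes (h : IsPrimeDecomp X l) (hP : ⟦P⟧ ∈ classes l) :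
    P.size ≤ X.size := by
  obtain ⟨Q, hQ, hQP⟩ := mem_classes.1 hP
  rw [(BisimClass.mk_eq_mk.1 hQP).symm.size_eq, h.2.size_eq]
  exact size_le_size_parList hQ

def CancellationBelow (n : ℕ) : Prop :=
  ∀ P Q R : Proc, P.size + R.size < n → .par P R ∼ .par Q R → P ∼ Q

def UniqueDecompBelow (n : ℕ) : Prop :=
  ∀ X l₁ l₂, X.size < n → IsPrimeDecomp X l₁ → IsPrimeDecomp X l₂ → classes l₁ = classes l₂

theorem IsPrimeDecomp.exists_pre_of_mem (hl : IsPrimeDecomp (.pre η W) l) (hP : P ∈ l) :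
    ∃ Z, P ∼ .pre η Z ∧ W ∼ .par Z (parList (l.erase P)) := by
  obtain ⟨α, Z, hPZ⟩ := (hl.1 P hP).exists_bisim_pre
  obtain ⟨P', hP', hZP'⟩ := hPZ.symm.exists_step (.pre α Z)
  obtain ⟨_, hW, hW'⟩ :=
    ((hl.2.trans (bisim_parList_erase hP)).symm).exists_step (.parL (parList (l.erase P)) hP')
  obtain ⟨hα, rfl⟩ := hW.pre_inv
  cases hα
  exact ⟨Z, hPZ, hW'.symm.trans (hZP'.symm.par_right _)⟩

theorem exists_step_of_bisim_par_pow {S T : Proc} {k : ℕ} {α : Act}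
    (h : W ∼ .par S (pow (.pre η T) k)) (hs : Step W (.act α) W') (hα : α ≠ η) :
    ∃ S', Step S (.act α) S' ∧ W' ∼ .par S' (pow (.pre η T) k) := by
  obtain ⟨_, hs', h'⟩ := h.exists_step hs
  rcases hs'.par_act_inv with ⟨S', hS', rfl⟩ | ⟨_, hpow, -⟩
  · exact ⟨S', hS', h'⟩
  · exact absurd hpow.act_eq_of_pow_pre hα

section UniqueDecomp

variable {n : ℕ} (hU : UniqueDecompBelow n)
include hU

/-- All prime factors of a prefix are bisimilar: two factors `P ∼ η.Z` and `Q ∼ η.Z'` give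
two decompositions of `W`, and comparing them puts the class of `Q` among the factors of `Z'`,
which is too small to contain it. -/
theorem bisim_of_mem_of_isPrimeDecomp_pre (hn : W.size < n) (hl : IsPrimeDecomp (.pre η W) l)
    (hP : P ∈ l) (hQ : Q ∈ l) : P ∼ Q := by
  by_contra hPQ
  obtain ⟨Z, -, hWP⟩ := hl.exists_pre_of_mem hP
  obtain ⟨Z', hQZ', hWQ⟩ := hl.exists_pre_of_mem hQ
  obtain ⟨L, hL⟩ := Z.exists_isPrimeDecomp
  obtain ⟨L', hL'⟩ := Z'.exists_isPrimeDecomp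
  have e := congrArg (Multiset.count ⟦Q⟧)
    (hU W _ _ hn ((hL.par (hl.erase P)).of_bisim hWP) ((hL'.par (hl.erase Q)).of_bisim hWQ))
  have eP := congrArg (Multiset.count ⟦Q⟧) (classes_eq_cons_erase hP)
  have eQ := congrArg (Multiset.count ⟦Q⟧) (classes_eq_cons_erase hQ)
  rw [Multiset.count_cons_of_ne fun h => hPQ (BisimClass.mk_eq_mk.1 h).symm] at eP
  rw [Multiset.count_cons_self] at eQ
  rw [classes_append, classes_append, Multiset.count_add, Multiset.count_add] at e
  have hQ_le : Q.size ≤ Z'.size := hL'.size_le_of_mem_classes (Multiset.count_pos.1 (by omega))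
  have hQ_eq : Q.size = 1 + Z'.size := hQZ'.size_eq
  omega

theorem exists_bisim_pow_pre (hn : W.size < n) (η : Act) :
    ∃ S r, IsPrime (.pre η S) ∧ .pre η W ∼ pow (.pre η S) (r + 1) ∧
      W ∼ .par S (pow (.pre η S) r) := by
  obtain ⟨l, hl⟩ := (Proc.pre η W).exists_isPrimeDecomp
  obtain ⟨P, t, rfl⟩ : ∃ P t, l = P :: t := by
    cases l with
    | nil => simpa [parList, Proc.size] using hl.2.size_eq
    | cons P t => exact ⟨P, t, rfl⟩
  obtain ⟨S, hPS, hWS⟩ := hl.exists_pre_of_mem List.mem_cons_self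
  have hall : ∀ Q ∈ P :: t, Q ∼ .pre η S := fun Q hQ =>
    (bisim_of_mem_of_isPrimeDecomp_pre hU hn hl hQ List.mem_cons_self).trans hPS
  rw [List.erase_cons_head] at hWS
  refine ⟨S, t.length, (hl.1 P List.mem_cons_self).of_bisim hPS,
    hl.2.trans (bisim_pow_of_forall_bisim hall), hWS.trans ?_⟩
  exact (bisim_pow_of_forall_bisim fun Q hQ => hall Q (List.mem_cons_of_mem P hQ)).par_left S

/-- Writing `η.W ∼ (η.S)^(m+1)` and `η̄.V ∼ (η̄.T)^(k+1)`, the factor `η.S` occurs `m + 1` times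
in the decomposition of the right-hand side, but only `m` times in that of the left-hand side
besides the factors of the derivative `S'` of `S`, which are too small to be `η.S`. -/
theorem not_bisim_par_pre_swap {W' V' : Proc} (hn : W.size + V.size < n)
    (hW : Step W (.act η.co) W') (hV : Step V (.act η) V') :
    ¬ .par W' (.pre η.co V) ∼ .par (.pre η W) V' := by
  intro hb
  obtain ⟨S, m, hS, hWpow, hWS⟩ := exists_bisim_pow_pre hU (W := W) (by omega) η
  obtain ⟨T, k, hT, hVpow, hVT⟩ := exists_bisim_pow_pre hU (W := V) (by omega) η.co
  obtain ⟨S', hS', hW'⟩ := exists_step_of_bisim_par_pow hWS hW (co_ne η)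
  obtain ⟨T', -, hV'⟩ := exists_step_of_bisim_par_pow hVT hV (co_ne η).symm
  obtain ⟨L, hL⟩ := S'.exists_isPrimeDecomp
  obtain ⟨L', hL'⟩ := T'.exists_isPrimeDecomp
  have hdec₁ := ((hL.par (.pow hS m)).of_bisim hW').par
    ((IsPrimeDecomp.pow hT (k + 1)).of_bisim hVpow)
  have hdec₂ := (((IsPrimeDecomp.pow hS (m + 1)).of_bisim hWpow).par
    ((hL'.par (.pow hT k)).of_bisim hV')).of_bisim hb
  have hsize := hW.size_act
  have e := congrArg (Multiset.count ⟦.pre η S⟧)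
    (hU (.par W' (.pre η.co V)) _ _ (by simp only [Proc.size]; omega) hdec₁ hdec₂)
  have hne : (⟦.pre η.co T⟧ : BisimClass) ≠ ⟦.pre η S⟧ := fun h =>
    co_ne η (BisimClass.mk_eq_mk.1 h).act_eq_of_pre
  simp only [classes_append, classes_replicate, Multiset.count_add, Multiset.count_replicate_self,
    Multiset.count_replicate, hne, if_false] at e
  have hSS' : (Proc.pre η S).size ≤ S'.size :=
    hL.size_le_of_mem_classes (Multiset.count_pos.1 (by omega))
  have := hS'.size_act
  simp only [Proc.size] at hSS'
  omega

end UniqueDecomp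

theorem exists_size_add_le_size_parList (hl : 2 ≤ l.length) :
    ∃ P ∈ l, ∀ Q ∈ l, P.size + Q.size ≤ (parList l).size := by
  obtain ⟨P, hP, hmin⟩ := l.toFinset.exists_min_image Proc.size
    (List.toFinset_nonempty_iff _ |>.2 (List.ne_nil_of_length_pos (by omega)))
  simp only [List.mem_toFinset] at hP hmin
  refine ⟨P, hP, fun Q hQ => ?_⟩
  obtain ⟨R, hR⟩ := List.exists_mem_of_length_pos
    (by rw [List.length_erase_of_mem hQ]; omega : 0 < (l.erase Q).length)
  have hsplit := (bisim_parList_erase hQ).size_eq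
  have := hmin R (List.mem_of_mem_erase hR)
  have := size_le_size_parList hR
  simp only [Proc.size] at hsplit
  omega

theorem two_le_length_of_forall_not_bisim (h₁ : IsPrimeDecomp X l₁) (h₂ : IsPrimeDecomp X l₂)
    (hdisj : ∀ P ∈ l₁, ∀ Q ∈ l₂, ¬ P ∼ Q) (hne : l₁ ≠ []) : 2 ≤ l₂.length := by
  obtain ⟨P, hP⟩ := List.exists_mem_of_ne_nil l₁ hne
  have hXP := h₁.2.trans (bisim_parList_erase hP)
  rcases l₂ with _ | ⟨Q, _ | ⟨_, _⟩⟩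
  · have := size_le_size_parList hP
    have := (h₁.1 P hP).size_pos
    have := h₁.2.symm.trans h₂.2 |>.size_eq
    simp only [parList, Proc.size] at this
    omega
  · have hQ : Q ∼ .par P (parList (l₁.erase P)) :=
      (Bisim.par_nil Q).symm.trans (h₂.2.symm.trans hXP)
    rcases (h₂.1 Q List.mem_cons_self).2 _ _ hQ with hP0 | hrest
    · exact absurd hP0 (h₁.1 P hP).1
    · exact absurd (hQ.trans ((hrest.par_left P).trans (Bisim.par_nil P))).symm
        (hdisj P hP Q List.mem_cons_self)
  · simp

section UniqueDecompStep

variable {n : ℕ}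

/-- Let `P'` be a derivative of the factor `P`. The move `X → P' ‖ (l₁ - P)` is answered by some
factor `Q` of `l₂`, and comparing decompositions of the two derivatives shows that the remaining
factors `l₂ - Q`, which share no class with `l₁`, all come from `P'`. -/
theorem exists_size_lt_add_of_forall_not_bisim (hU : UniqueDecompBelow n) (hX : X.size ≤ n)
    (h₁ : IsPrimeDecomp X l₁) (h₂ : IsPrimeDecomp X l₂) (hdisj : ∀ P ∈ l₁, ∀ Q ∈ l₂, ¬ P ∼ Q)
    (hP : P ∈ l₁) : ∃ Q ∈ l₂, X.size < P.size + Q.size := by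
  obtain ⟨η, P', hP'⟩ := Proc.exists_act_step_of_size_pos (h₁.1 P hP).size_pos
  have hXP := h₁.2.trans (bisim_parList_erase hP)
  obtain ⟨_, hT, hT'⟩ := (hXP.symm.trans h₂.2).exists_step (.parL _ hP')
  obtain ⟨Q, Q', l₂', hperm, hQ', hTQ⟩ := hT.parList_act_inv
  obtain ⟨L, hL⟩ := P'.exists_isPrimeDecomp
  obtain ⟨L', hL'⟩ := Q'.exists_isPrimeDecomp
  have hl₂' : ∀ R ∈ l₂', R ∈ l₂ := fun R hR => hperm.symm.subset (List.mem_cons_of_mem Q hR)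
  have hsize₁ := hXP.size_eq
  have hsize₂ := (h₂.2.trans (bisim_parList_perm hperm)).size_eq
  have hsize₃ := hP'.size_act
  simp only [parList, Proc.size] at hsize₁ hsize₂
  have e := hU (.par P' (parList (l₁.erase P))) _ _ (by simp only [Proc.size]; omega)
    (hL.par (h₁.erase P))
    ((hL'.par (isPrimeDecomp_parList fun R hR => h₂.1 R (hl₂' R hR))).of_bisim (hT'.trans hTQ))
  have hle : classes l₂' ≤ classes L := by
    refine Multiset.le_iff_count.2 fun x => ?_
    by_cases hx : x ∈ classes l₂'
    · have hx₁ : x ∉ classes (l₁.erase P) := by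
        intro hx₁
        obtain ⟨R, hR, rfl⟩ := mem_classes.1 hx₁
        obtain ⟨R', hR', hRR'⟩ := mem_classes.1 hx
        exact hdisj R (List.mem_of_mem_erase hR) R' (hl₂' R' hR')
          (BisimClass.mk_eq_mk.1 hRR'.symm)
      have := congrArg (Multiset.count x) e
      rw [classes_append, classes_append, Multiset.count_add, Multiset.count_add,
        Multiset.count_eq_zero.2 hx₁] at this
      omega
    · simp [Multiset.count_eq_zero.2 hx]
  have := size_parList_le_of_classes_le hle
  have := hL.2.size_eq
  exact ⟨Q, hperm.symm.subset List.mem_cons_self, by omega⟩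

theorem exists_forall_size_lt_of_forall_not_bisim (hU : UniqueDecompBelow n) (hX : X.size ≤ n)
    (h₁ : IsPrimeDecomp X l₁) (h₂ : IsPrimeDecomp X l₂) (hdisj : ∀ P ∈ l₁, ∀ Q ∈ l₂, ¬ P ∼ Q)
    (hl : 2 ≤ l₁.length) : ∃ Q ∈ l₂, ∀ P ∈ l₁, P.size < Q.size := by
  obtain ⟨P, hP, hmin⟩ := exists_size_add_le_size_parList hl
  obtain ⟨Q, hQ, hPQ⟩ := exists_size_lt_add_of_forall_not_bisim hU hX h₁ h₂ hdisj hP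
  refine ⟨Q, hQ, fun P' hP' => ?_⟩
  have := hmin P' hP'
  have := h₁.2.size_eq
  omega

/-- Without a common class, each side would have a factor larger than all factors of the other. -/
theorem eq_nil_of_forall_not_bisim (hU : UniqueDecompBelow n) (hX : X.size ≤ n)
    (h₁ : IsPrimeDecomp X l₁) (h₂ : IsPrimeDecomp X l₂) (hdisj : ∀ P ∈ l₁, ∀ Q ∈ l₂, ¬ P ∼ Q) :
    l₁ = [] := by
  by_contra hne
  have hdisj' : ∀ Q ∈ l₂, ∀ P ∈ l₁, ¬ Q ∼ P := fun Q hQ P hP h => hdisj P hP Q hQ h.symm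
  have hl₂ := two_le_length_of_forall_not_bisim h₁ h₂ hdisj hne
  have hl₁ := two_le_length_of_forall_not_bisim h₂ h₁ hdisj' (List.ne_nil_of_length_pos (by omega))
  obtain ⟨Q, hQ, hQ_max⟩ := exists_forall_size_lt_of_forall_not_bisim hU hX h₁ h₂ hdisj hl₁
  obtain ⟨P, hP, hP_max⟩ := exists_forall_size_lt_of_forall_not_bisim hU hX h₂ h₁ hdisj' hl₂
  exact lt_asymm (hQ_max P hP) (hP_max Q hQ)

theorem classes_eq_of_mem_of_bisim (hC : CancellationBelow (n + 1)) (hU : UniqueDecompBelow n)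
    (hX : X.size < n + 1) (h₁ : IsPrimeDecomp X l₁) (h₂ : IsPrimeDecomp X l₂) (hP : P ∈ l₁)
    (hQ : Q ∈ l₂) (hPQ : P ∼ Q) : classes l₁ = classes l₂ := by
  have hXP := h₁.2.trans (bisim_parList_erase hP)
  have hXQ := h₂.2.trans (bisim_parList_erase hQ)
  have hsize := hXP.size_eq
  have := (h₁.1 P hP).size_pos
  simp only [Proc.size] at hsize
  have hrest : parList (l₁.erase P) ∼ parList (l₂.erase Q) := by
    refine hC _ _ P (by omega) ?_
    calc .par (parList (l₁.erase P)) P ∼ .par P (parList (l₁.erase P)) := Bisim.par_comm _ _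
      _ ∼ .par Q (parList (l₂.erase Q)) := hXP.symm.trans hXQ
      _ ∼ .par P (parList (l₂.erase Q)) := hPQ.symm.par_right _
      _ ∼ .par (parList (l₂.erase Q)) P := Bisim.par_comm _ _
  rw [classes_eq_cons_erase hP, classes_eq_cons_erase hQ, BisimClass.mk_eq_mk.2 hPQ,
    hU _ _ _ (by omega) (h₁.erase P) ((h₂.erase Q).of_bisim hrest)]

theorem uniqueDecompBelow_succ (hC : CancellationBelow (n + 1)) (hU : UniqueDecompBelow n) :
    UniqueDecompBelow (n + 1) := by
  intro X l₁ l₂ hX h₁ h₂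
  by_cases hshared : ∃ P ∈ l₁, ∃ Q ∈ l₂, P ∼ Q
  · obtain ⟨P, hP, Q, hQ, hPQ⟩ := hshared
    exact classes_eq_of_mem_of_bisim hC hU hX h₁ h₂ hP hQ hPQ
  · push Not at hshared
    rw [eq_nil_of_forall_not_bisim hU (by omega) h₁ h₂ hshared,
      eq_nil_of_forall_not_bisim hU (by omega) h₂ h₁ fun Q hQ P hP h => hshared P hP Q hQ h.symm]

end UniqueDecompStep

theorem Step.tau_or_exists_pre_par {Q₁ Q₂ : Proc} {α : Act} (h₁ : Step Q (.act α) Q₁)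
    (h₂ : Step Q₁ (.act α.co) Q₂) :
    Step Q .tau Q₂ ∨
      ∃ W W' N, Q ∼ .par (.pre α W) N ∧ Step W (.act α.co) W' ∧ Q₂ ∼ .par W' N := by
  generalize hμ : Lab.act α = μ at h₁
  induction h₁ generalizing Q₂ with
  | pre η P =>
    cases hμ
    exact .inr ⟨P, Q₂, .nil, (Bisim.par_nil _).symm, h₂, (Bisim.par_nil _).symm⟩
  | syn => cases hμ
  | parL C h ih =>
    subst hμ
    rcases h₂.par_act_inv with ⟨A₂, hA₂, rfl⟩ | ⟨C₂, hC₂, rfl⟩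
    · rcases ih hA₂ rfl with hτ | ⟨W, W', N, hA, hW, hA₂'⟩
      · exact .inl (.parL C hτ)
      · exact .inr ⟨W, W', .par N C, (hA.par_right C).trans (Bisim.par_assoc _ _ _).symm, hW,
          (hA₂'.par_right C).trans (Bisim.par_assoc _ _ _).symm⟩
    · exact .inl (.syn h hC₂)
  | parR C h ih =>
    subst hμ
    rcases h₂.par_act_inv with ⟨C₂, hC₂, rfl⟩ | ⟨A₂, hA₂, rfl⟩
    · exact .inl (.syn hC₂ (by rwa [co_co]))
    · rcases ih hA₂ rfl with hτ | ⟨W, W', N, hA, hW, hA₂'⟩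
      · exact .inl (.parR C hτ)
      · exact .inr ⟨W, W', .par C N, (hA.par_left C).trans (Bisim.par_left_comm _ _ _), hW,
          (hA₂'.par_left C).trans (Bisim.par_left_comm _ _ _)⟩

section CancellationStep

variable {n : ℕ} (hC : CancellationBelow n)
include hC

theorem exists_act_step_of_bisim_par_step (hs : Step A (.act η) B)
    (hb : .par P A ∼ .par Q B) (hn : P.size + B.size < n) :
    ∃ Q', Step Q (.act η) Q' ∧ P ∼ Q' := by
  induction hk : B.size using Nat.strong_induction_on generalizing A B with
  | _ k ih =>
  obtain ⟨_, hT, hbT⟩ := hb.exists_step (.parR P hs)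
  rcases hT.par_act_inv with ⟨Q', hQ', rfl⟩ | ⟨B', hB', rfl⟩
  · exact ⟨Q', hQ', hC P Q' B hn hbT⟩
  · have := hB'.size_act
    exact ih B'.size (by omega) hB' hbT (by omega) rfl

theorem exists_act_step_of_bisim_par (hb : .par P R ∼ .par Q R) (hn : P.size + R.size ≤ n)
    (hs : Step P (.act η) P') : ∃ Q', Step Q (.act η) Q' ∧ P' ∼ Q' := by
  have := hs.size_act
  obtain ⟨_, hT, hbT⟩ := hb.exists_step (.parL R hs)
  rcases hT.par_act_inv with ⟨Q', hQ', rfl⟩ | ⟨R', hR', rfl⟩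
  · exact ⟨Q', hQ', hC P' Q' R (by omega) hbT⟩
  · exact exists_act_step_of_bisim_par_step hC hR' hbT (by have := hR'.size_act; omega)

variable (hU : UniqueDecompBelow n)
include hU

/-- A second path `η.W ‖ N →η̄ →η K` that does not contain a τ-step would have to use a prefix
`η̄.V` of `N`, and cancelling the rest `M` of `N` from `W' ‖ N ∼ K` leaves the bisimilarity excluded
by `not_bisim_par_pre_swap`. -/
theorem exists_tau_step_of_pre_par {N W' K₁ K₂ : Proc} (hn : 1 + W.size + N.size ≤ n)
    (hW : Step W (.act η.co) W') (h₁ : Step (.par (.pre η W) N) (.act η.co) K₁)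
    (h₂ : Step K₁ (.act η) K₂) (hb : .par W' N ∼ K₂) :
    ∃ K₃, Step (.par (.pre η W) N) .tau K₃ ∧ K₂ ∼ K₃ := by
  obtain ⟨N₁, hN₁, rfl⟩ : ∃ N₁, Step N (.act η.co) N₁ ∧ K₁ = .par (.pre η W) N₁ := by
    rcases h₁.par_act_inv with ⟨_, h, -⟩ | h
    · exact absurd (Lab.act.inj h.pre_inv.1) (co_ne η)
    · exact h
  rcases h₂.par_act_inv with ⟨_, hA, rfl⟩ | ⟨N₂, hN₂, rfl⟩
  · obtain ⟨-, rfl⟩ := hA.pre_inv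
    exact ⟨_, .syn (.pre η _) hN₁, .refl _⟩
  rcases hN₁.tau_or_exists_pre_par (by rwa [co_co]) with hτ | ⟨V, V', M, hN, hV, hN₂'⟩
  · exact ⟨_, .parR _ hτ, .refl _⟩
  exfalso
  rw [co_co] at hV
  have hsize := hN.size_eq
  have := hW.size_act
  simp only [Proc.size] at hsize hn
  refine not_bisim_par_pre_swap hU (by omega) hW hV (hC _ _ M (by simp only [Proc.size]; omega) ?_)
  calc .par (.par W' (.pre η.co V)) M
      ∼ .par W' (.par (.pre η.co V) M) := (Bisim.par_assoc _ _ _).symm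
    _ ∼ .par W' N := hN.symm.par_left W'
    _ ∼ .par (.pre η W) N₂ := hb
    _ ∼ .par (.pre η W) (.par V' M) := hN₂'.par_left _
    _ ∼ .par (.par (.pre η W) V') M := Bisim.par_assoc _ _ _

theorem exists_tau_step_of_paths {Q₁ Q₂ Q₁' Q₂' : Proc} (hn : Q.size ≤ n)
    (h₁ : Step Q (.act η) Q₁) (h₂ : Step Q₁ (.act η.co) Q₂)
    (h₁' : Step Q (.act η.co) Q₁') (h₂' : Step Q₁' (.act η) Q₂') (hb : Q₂ ∼ Q₂') :
    ∃ Q₃, Step Q .tau Q₃ ∧ Q₂ ∼ Q₃ := by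
  rcases h₁.tau_or_exists_pre_par h₂ with hτ | ⟨W, W', N, hQ, hW, hQ₂⟩
  · exact ⟨Q₂, hτ, .refl _⟩
  obtain ⟨K₁, hK₁, hK₁'⟩ := hQ.exists_step h₁'
  obtain ⟨K₂, hK₂, hK₂'⟩ := hK₁'.exists_step h₂'
  have hsize := hQ.size_eq
  simp only [Proc.size] at hsize
  obtain ⟨K₃, hK₃, hK₂₃⟩ := exists_tau_step_of_pre_par hC hU (by omega) hW hK₁ hK₂
    (hQ₂.symm.trans (hb.trans hK₂'))
  obtain ⟨Q₃, hQ₃, hK₃Q₃⟩ := hQ.symm.exists_step hK₃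
  exact ⟨Q₃, hQ₃, hb.trans (hK₂'.trans (hK₂₃.trans hK₃Q₃))⟩

theorem exists_tau_step_of_bisim_par (hb : .par P R ∼ .par Q R) (hn : P.size + R.size ≤ n)
    (hs : Step P .tau P') : ∃ Q', Step Q .tau Q' ∧ P' ∼ Q' := by
  obtain ⟨α, X, Y, hX, hXP', hY, hYP'⟩ := hs.exists_act_co_of_tau
  obtain ⟨Q₁, hQ₁, hXQ₁⟩ := exists_act_step_of_bisim_par hC hb hn hX
  obtain ⟨Q₂, hQ₂, hP'Q₂⟩ := hXQ₁.exists_step hXP'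
  obtain ⟨Q₁', hQ₁', hYQ₁'⟩ := exists_act_step_of_bisim_par hC hb hn hY
  obtain ⟨Q₂', hQ₂', hP'Q₂'⟩ := hYQ₁'.exists_step hYP'
  have hsize := hb.size_eq
  simp only [Proc.size] at hsize
  obtain ⟨Q₃, hQ₃, hQ₂₃⟩ := exists_tau_step_of_paths hC hU (by omega) hQ₁ hQ₂ hQ₁' hQ₂'
    (hP'Q₂.symm.trans hP'Q₂')
  exact ⟨Q₃, hQ₃, hP'Q₂.trans hQ₂₃⟩

theorem exists_step_of_bisim_par (hb : .par P R ∼ .par Q R) (hn : P.size + R.size ≤ n)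
    (hs : Step P μ P') : ∃ Q', Step Q μ Q' ∧ P' ∼ Q' := by
  cases μ with
  | act η => exact exists_act_step_of_bisim_par hC hb hn hs
  | tau => exact exists_tau_step_of_bisim_par hC hU hb hn hs

theorem cancellationBelow_succ : CancellationBelow (n + 1) := by
  intro P Q R hn hb
  have hsize := hb.size_eq
  simp only [Proc.size] at hsize
  refine .of_steps (fun μ P' hs => exists_step_of_bisim_par hC hU hb (by omega) hs)
    fun μ Q' hs => ?_
  obtain ⟨P', hP', hQ'P'⟩ := exists_step_of_bisim_par hC hU hb.symm (by omega) hs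
  exact ⟨P', hP', hQ'P'.symm⟩

end CancellationStep

theorem cancellationBelow_and_uniqueDecompBelow (n : ℕ) :
    CancellationBelow n ∧ UniqueDecompBelow n := by
  induction n with
  | zero => exact ⟨fun _ _ _ h => absurd h (Nat.not_lt_zero _),
    fun _ _ _ h => absurd h (Nat.not_lt_zero _)⟩
  | succ n ih =>
    have hC := cancellationBelow_succ ih.1 ih.2
    exact ⟨hC, uniqueDecompBelow_succ hC ih.2⟩

/-- cancellation for strong bisimilarity in microCCS. -/
theorem bisim_cancellation {P Q R : Proc}
    (h : Bisim (.par P R) (.par Q R)) : Bisim P Q :=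
  (cancellationBelow_and_uniqueDecompBelow _).1 P Q R (Nat.lt_succ_self _) h
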